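/- For every integer d ≥ 0 and real s > 0, the limit lim_{e→∞} S_d^{p^e}(s·p^e)/p^{ed} exists and equals Σ_{i=0}^{⌊s⌋} ((-1)^i / d!) · C(d,i) · (s-i)^d, where p > 1 is any fixed integer. -/

import Mathlib

open Finset Filter

/-- `S d m r` counts tuples `(a_1, ..., a_d)` of nonnegative integers with
`a_1 + ... + a_d < r` and `a_j < m` for all `j`. -/
noncomputable def S (d m : ℕ) (r : ℝ) : ℕ :=
  ((Fintype.piFinset fun _ : Fin d => Finset.range m).filter
    fun a => ((∑ j, a j : ℕ) : ℝ) < r).card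

/-- `E d s = ∑_{i=0}^{⌊s⌋} ((-1)^i / d!) * C(d,i) * (s - i)^d` for `s > 0`. -/
noncomputable def E (d : ℕ) (s : ℝ) : ℝ :=
  ∑ i ∈ Finset.range (⌊s⌋.toNat + 1),
    ((-1 : ℝ) ^ i / d.factorial) * (d.choose i : ℝ) * (s - i) ^ d

/-!
Inclusion–exclusion over the coordinates forced to be `≥ m` gives
`S d m r = ∑_{i ≤ d} (-1)^i C(d,i) #(simplex d (⌈r⌉ - i m))`, where `simplex d n` is the set
of tuples in `ℕ^d` with sum `< n`, and stars and bars gives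
`d! #(simplex d n) = n (n + 1) ⋯ (n + d - 1)` for `n > 0`. For `m = q` and `r = s q` the
`i`-th term vanishes when `i ≥ s`, and otherwise it is asymptotic to `((s - i) q)^d / d!` as
`q → ∞`.
-/

open Topology

def simplex (d n : ℕ) : Finset (Fin d → ℕ) :=
  {a ∈ Fintype.piFinset fun _ => range n | ∑ j, a j < n}

@[simp]
lemma mem_simplex {d n : ℕ} {a : Fin d → ℕ} : a ∈ simplex d n ↔ ∑ j, a j < n := by
  simp only [simplex, mem_filter, Fintype.mem_piFinset, mem_range, and_iff_right_iff_imp]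
  exact fun h j => (single_le_sum (fun i _ => Nat.zero_le (a i)) (mem_univ j)).trans_lt h

lemma simplex_zero (d : ℕ) : simplex d 0 = ∅ := by
  ext a; simp

def simplexSuccEquiv (d n : ℕ) :
    simplex d (n + 1) ≃ {b : Fin (d + 1) → ℕ // ∑ i, b i = n} where
  toFun a := ⟨Fin.cons (n - ∑ j, a.1 j) a.1, by
    have := mem_simplex.1 a.2
    rw [Fin.sum_cons]; omega⟩
  invFun b := ⟨Fin.tail b.1, by
    have := b.2
    rw [Fin.sum_univ_succ] at this
    rw [mem_simplex]; exact Nat.lt_succ_of_le (by simp only [Fin.tail]; omega)⟩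
  left_inv a := by simp
  right_inv := by
    rintro ⟨b, hb⟩
    rw [Fin.sum_univ_succ] at hb
    apply Subtype.ext
    funext i
    cases i using Fin.cases
    · simp [Fin.tail]; omega
    · simp [Fin.tail]

lemma card_simplex_succ (d n : ℕ) : #(simplex d (n + 1)) = (n + d).choose d := by
  rw [card_eq_of_equiv_fintype
      ((simplexSuccEquiv d n).trans (Sym.equivNatSumOfFintype _ n).symm), Sym.card_sym_eq_choose,
    Fintype.card_fin, Nat.add_right_comm, Nat.add_sub_cancel, add_comm, Nat.choose_symm_add]

lemma factorial_mul_card_simplex (d : ℕ) {n : ℕ} (hn : 0 < n) :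
    d.factorial * #(simplex d n) = n.ascFactorial d := by
  obtain ⟨n, rfl⟩ := Nat.exists_eq_add_of_lt hn
  rw [zero_add, card_simplex_succ, Nat.ascFactorial_eq_factorial_mul_choose]

lemma card_filter_forall_le_simplex {d : ℕ} (c : Fin d → ℕ) (n : ℕ) :
    #{a ∈ simplex d n | ∀ j, c j ≤ a j} = #(simplex d (n - ∑ j, c j)) := by
  refine (card_nbij' (· + c) (· - c) ?_ ?_ ?_ ?_).symm
  · intro b hb
    rw [mem_coe, mem_simplex] at hb
    refine mem_filter.2 ⟨?_, fun j => Nat.le_add_left _ _⟩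
    rw [mem_simplex]
    change ∑ j, (b j + c j) < n
    rw [sum_add_distrib]
    omega
  · intro a ha
    obtain ⟨ha, hca⟩ := mem_filter.1 ha
    rw [mem_simplex] at ha
    rw [mem_coe, mem_simplex]
    change ∑ j, (a j - c j) < n - ∑ j, c j
    rw [sum_tsub_distrib _ fun j _ => hca j]
    have := sum_le_sum fun j (_ : j ∈ univ) => hca j
    omega
  · intro b _
    exact add_tsub_cancel_right b c
  · intro a ha
    exact tsub_add_cancel_of_le fun j => (mem_filter.1 ha).2 j

lemma card_filter_forall_not_eq_sum_powerset {α ι : Type*} [DecidableEq ι] (U : Finset α)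
    (s : Finset ι) (P : ι → α → Prop) [∀ i, DecidablePred (P i)] :
    (#{a ∈ U | ∀ i ∈ s, ¬P i a} : ℤ) =
      ∑ t ∈ s.powerset, (-1 : ℤ) ^ #t * #{a ∈ U | ∀ i ∈ t, P i a} := by
  have hindicator (a : α) : (if ∀ i ∈ s, ¬P i a then 1 else 0 : ℤ)
      = ∑ t ∈ s.powerset, (-1) ^ #t * if ∀ i ∈ t, P i a then 1 else 0 := by
    have h : ∏ i ∈ s, (1 - if P i a then 1 else 0 : ℤ) =
        if ∀ i ∈ s, ¬P i a then 1 else 0 := by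
      rw [← prod_boole]
      exact prod_congr rfl fun i _ => by split_ifs <;> simp_all
    rw [← h, prod_sub]
    simp [prod_boole]
  simp only [natCast_card_filter, hindicator, mul_sum]
  exact sum_comm

lemma card_filter_forall_lt_simplex (d m n : ℕ) :
    (#{a ∈ simplex d n | ∀ j, a j < m} : ℤ) =
      ∑ i ∈ range (d + 1), (-1 : ℤ) ^ i * d.choose i * #(simplex d (n - i * m)) := by
  have hshift (t : Finset (Fin d)) :
      #{a ∈ simplex d n | ∀ j ∈ t, m ≤ a j} = #(simplex d (n - #t * m)) := by
    have h := card_filter_forall_le_simplex (fun j => if j ∈ t then m else 0) n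
    rw [sum_ite_mem, univ_inter, sum_const, smul_eq_mul] at h
    rw [← h]
    congr 1
    refine filter_congr fun a _ => forall_congr' fun j => ?_
    split_ifs <;> simp [*]
  have h := card_filter_forall_not_eq_sum_powerset (simplex d n) univ (fun j a => m ≤ a j)
  simp only [mem_univ, true_imp_iff, not_le] at h
  rw [h]
  trans ∑ t ∈ (univ : Finset (Fin d)).powerset, (-1 : ℤ) ^ #t * #(simplex d (n - #t * m))
  · refine sum_congr rfl fun t _ => ?_
    rw [← hshift]
    -- the two filters differ only in their `Decidable` instances
    convert rfl
  rw [sum_powerset_apply_card (fun i => (-1 : ℤ) ^ i * #(simplex d (n - i * m))), card_univ,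
    Fintype.card_fin]
  simp only [nsmul_eq_mul, mul_assoc, mul_left_comm]

lemma S_eq_card_filter_simplex (d m : ℕ) (r : ℝ) :
    S d m r = #{a ∈ simplex d ⌈r⌉₊ | ∀ j, a j < m} := by
  rw [S]
  congr 1
  ext a
  simp only [mem_filter, Fintype.mem_piFinset, mem_range, mem_simplex, Nat.lt_ceil]
  exact and_comm

lemma cast_S_mul_eq_sum (d m : ℕ) (s : ℝ) :
    (S d m (s * m) : ℝ) = ∑ i ∈ {i ∈ range (d + 1) | ((i : ℕ) : ℝ) < s},
      (-1 : ℝ) ^ i * d.choose i * #(simplex d (⌈s * m⌉₊ - i * m)) := by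
  have h : (S d m (s * m) : ℝ) = ∑ i ∈ range (d + 1),
      (-1 : ℝ) ^ i * d.choose i * #(simplex d (⌈s * m⌉₊ - i * m)) := by
    rw [S_eq_card_filter_simplex]
    exact_mod_cast card_filter_forall_lt_simplex d m ⌈s * m⌉₊
  rw [h, sum_filter_of_ne]
  intro i _ hne
  by_contra! hsi
  have : ⌈s * m⌉₊ - i * m = 0 := by
    rw [Nat.sub_eq_zero_iff_le, Nat.ceil_le, Nat.cast_mul]
    exact mul_le_mul_of_nonneg_right hsi m.cast_nonneg
  simp [this, simplex_zero] at hne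

lemma E_eq_sum_filter (d : ℕ) {s : ℝ} (hs : 0 < s) :
    E d s = ∑ i ∈ {i ∈ range (d + 1) | ((i : ℕ) : ℝ) < s},
      ((-1 : ℝ) ^ i / d.factorial) * d.choose i * (s - i) ^ d := by
  rw [E, Int.floor_toNat]
  refine (sum_subset (fun i hi => ?_) fun i hi_floor hi => ?_).symm
  · exact mem_range_succ_iff.2 (Nat.le_floor (mem_filter.1 hi).2.le)
  rw [mem_range_succ_iff] at hi_floor
  rw [mem_filter, mem_range_succ_iff, not_and, not_lt] at hi
  suffices (d.choose i : ℝ) * (s - i) ^ d = 0 by rw [mul_assoc, this, mul_zero]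
  rcases lt_or_ge d i with hdi | hid
  · simp [Nat.choose_eq_zero_of_lt hdi]
  have hsi : s = i := le_antisymm (hi hid) ((Nat.le_floor_iff hs.le).1 hi_floor)
  rcases Nat.eq_zero_or_pos d with rfl | hd
  · rw [Nat.le_zero.1 hid, Nat.cast_zero] at hsi
    exact absurd hsi hs.ne'
  · rw [hsi, sub_self, zero_pow hd.ne', mul_zero]

lemma tendsto_card_simplex_div_pow {α : Type*} {l : Filter α} {x : α → ℕ} {q : α → ℝ}
    {t : ℝ} (ht : 0 < t) (hq : Tendsto q l atTop)
    (hx : Tendsto (fun a => (x a : ℝ) / q a) l (𝓝 t)) (d : ℕ) :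
    Tendsto (fun a => (#(simplex d (x a)) : ℝ) / q a ^ d) l (𝓝 (t ^ d / d.factorial)) := by
  have hfactor (j : ℕ) : Tendsto (fun a => ((x a + j : ℕ) : ℝ) / q a) l (𝓝 t) := by
    have hj : Tendsto (fun a => (j : ℝ) / q a) l (𝓝 0) := tendsto_const_nhds.div_atTop hq
    simpa [add_div] using hx.add hj
  have hprod := (tendsto_finsetProd (range d) fun j _ => hfactor j).div_const (d.factorial : ℝ)
  rw [prod_const, card_range] at hprod
  refine hprod.congr' ?_
  have hx_pos : ∀ᶠ a in l, 0 < x a := by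
    filter_upwards [hx.eventually (lt_mem_nhds ht), hq.eventually_gt_atTop 0] with a h hqa
    exact_mod_cast (div_pos_iff_of_pos_right hqa).1 h
  filter_upwards [hx_pos] with a ha
  have hfac : (d.factorial : ℝ) * #(simplex d (x a)) =
      ∏ j ∈ range d, ((x a + j : ℕ) : ℝ) := by
    rw [← Nat.cast_prod, ← Nat.ascFactorial_eq_prod_range, ← factorial_mul_card_simplex d ha,
      Nat.cast_mul]
  rw [prod_div_distrib, prod_const, card_range, ← hfac]
  field_simp

lemma tendsto_ceil_mul_sub_div {α : Type*} {l : Filter α} {q : α → ℕ}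
    (hq : Tendsto (fun a => (q a : ℝ)) l atTop) {s : ℝ} {i : ℕ} (hi : (i : ℝ) ≤ s) :
    Tendsto (fun a => ((⌈s * q a⌉₊ - i * q a : ℕ) : ℝ) / q a) l (𝓝 (s - i)) := by
  have hceil := (tendsto_nat_ceil_mul_div_atTop (i.cast_nonneg.trans hi)).comp hq
  refine (hceil.sub_const (i : ℝ)).congr' ?_
  filter_upwards [hq.eventually_gt_atTop 0] with a ha
  have hle : i * q a ≤ ⌈s * q a⌉₊ := by
    exact_mod_cast (mul_le_mul_of_nonneg_right hi (q a).cast_nonneg).trans (Nat.le_ceil _)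
  simp [Nat.cast_sub hle, sub_div, mul_div_cancel_right₀ _ ha.ne']

theorem tendsto_S_div_pow_of_tendsto_atTop {α : Type*} {l : Filter α} {q : α → ℕ}
    (hq : Tendsto (fun a => (q a : ℝ)) l atTop) (d : ℕ) {s : ℝ} (hs : 0 < s) :
    Tendsto (fun a => (S d (q a) (s * q a) : ℝ) / (q a : ℝ) ^ d) l (𝓝 (E d s)) := by
  simp_rw [cast_S_mul_eq_sum, sum_div, E_eq_sum_filter d hs]
  refine tendsto_finsetSum _ fun i hi => ?_
  have hi : (i : ℝ) < s := (mem_filter.1 hi).2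
  convert (tendsto_card_simplex_div_pow (sub_pos.2 hi) hq (tendsto_ceil_mul_sub_div hq hi.le)
    d).const_mul ((-1 : ℝ) ^ i * d.choose i) using 2 <;> ring

theorem tendsto_S_div_pow (d p : ℕ) (hp : 1 < p) (s : ℝ) (hs : 0 < s) :
    Tendsto (fun e : ℕ => (S d (p ^ e) (s * (p : ℝ) ^ e) : ℝ) / (p : ℝ) ^ (e * d))
      atTop (nhds (E d s)) := by
  have hq : Tendsto (fun e : ℕ => ((p ^ e : ℕ) : ℝ)) atTop atTop := by
    simpa using tendsto_pow_atTop_atTop_of_one_lt (by exact_mod_cast hp : (1 : ℝ) < p)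
  simpa [pow_mul] using tendsto_S_div_pow_of_tendsto_atTop hq d hs
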